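/- For every n ≥ 4, the independence complex of the cycle graph Cₙ is homotopy equivalent to the suspension of the independence complex of C_{n−3}: Ind(Cₙ) ≃ Σ Ind(C_{n−3}). -/
import Mathlib


open scoped Classical

noncomputable section

/-- Geometric realization of the independence complex of the (possibly loopy) relation
`R`: convex-combination functions whose support contains no pair related by `R`
(in particular no vertex carrying a loop). -/
def geom {V : Type*} [Fintype V] (R : V → V → Prop) : Set (V → ℝ) :=
  {f | (∀ x, 0 ≤ f x) ∧ (∑ x, f x) = 1 ∧ ∀ x y, f x ≠ 0 → f y ≠ 0 → ¬ R x y}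

/-- Relation on `V ⊕ Fin 2` realizing the unreduced suspension `Σ Ind(R) = Ind(R) ∗ S⁰`. -/
def suspRel {V : Type*} (R : V → V → Prop) : V ⊕ Fin 2 → V ⊕ Fin 2 → Prop :=
  fun x y =>
    match x, y with
    | Sum.inl a, Sum.inl b => R a b
    | Sum.inr a, Sum.inr b => a ≠ b
    | _, _ => False

/-- The adjacency relation of the cycle `Cₙ` on vertex set `Fin n` (`i` adjacent to
`i ± 1 (mod n)`).  By this convention `C₁` is a single vertex with a loop, so that
`Ind(C₁) = ∅ = S⁻¹`, and `C₂ = P₂`. -/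
def cycRel (n : ℕ) : Fin n → Fin n → Prop :=
  fun i j => (i.val + 1) % n = j.val ∨ (j.val + 1) % n = i.val

namespace S7

variable {V : Type*} [Fintype V]

def ssupp (f : V → ℝ) : Set V := {v | f v ≠ 0}

def sgeom (A : Set V → Prop) : Set (V → ℝ) :=
  {f | (∀ x, 0 ≤ f x) ∧ (∑ x, f x) = 1 ∧ A (ssupp f)}

theorem geom_eq_sgeom (R : V → V → Prop) :
    geom R = sgeom (fun σ => ∀ u ∈ σ, ∀ v ∈ σ, ¬R u v) := by
  ext f
  simp only [geom, sgeom, ssupp, Set.mem_setOf_eq]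
  constructor
  · rintro ⟨h0, h1, h2⟩; exact ⟨h0, h1, fun u hu v hv => h2 u v hu hv⟩
  · rintro ⟨h0, h1, h2⟩; exact ⟨h0, h1, fun u v hu hv => h2 u hu v hv⟩

theorem ret (A A' : Set V → Prop)
    (hA : ∀ ⦃s t : Set V⦄, s ⊆ t → A t → A s)
    (hsub : ∀ ⦃s⦄, A' s → A s)
    (r : (V → ℝ) → (V → ℝ)) (hr : Continuous r)
    (h1 : ∀ f ∈ sgeom A, r f ∈ sgeom A')
    (h2 : ∀ f ∈ sgeom A', r f = f)
    (h3 : ∀ f ∈ sgeom A, A (ssupp f ∪ ssupp (r f))) :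
    Nonempty (ContinuousMap.HomotopyEquiv (sgeom A) (sgeom A')) := by
  let F : C((sgeom A : Set (V → ℝ)), (sgeom A' : Set (V → ℝ))) :=
    ⟨fun f => ⟨r f.1, h1 f.1 f.2⟩, (hr.comp continuous_subtype_val).subtype_mk _⟩
  let G : C((sgeom A' : Set (V → ℝ)), (sgeom A : Set (V → ℝ))) :=
    ⟨fun f => ⟨f.1, f.2.1, f.2.2.1, hsub f.2.2.2⟩, continuous_subtype_val.subtype_mk _⟩
  have hmem : ∀ (t : unitInterval) (f : (sgeom A : Set (V → ℝ))),
      (fun v => (1 - (t : ℝ)) * r f.1 v + (t : ℝ) * f.1 v) ∈ sgeom A := by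
    intro t f
    have hf := f.2
    have hrf := h1 f.1 f.2
    refine ⟨?_, ?_, ?_⟩
    · intro v
      have h1t : (0:ℝ) ≤ 1 - (t : ℝ) := by
        have := t.2.2; linarith
      have := t.2.1
      have := hrf.1 v
      have := hf.1 v
      show 0 ≤ (1 - (t : ℝ)) * r f.1 v + (t : ℝ) * f.1 v
      positivity
    · have : (∑ v, ((1 - (t : ℝ)) * r f.1 v + (t : ℝ) * f.1 v))
          = (1 - (t : ℝ)) * (∑ v, r f.1 v) + (t : ℝ) * (∑ v, f.1 v) := by
        rw [Finset.sum_add_distrib, Finset.mul_sum, Finset.mul_sum]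
      rw [this, hrf.2.1, hf.2.1]; ring
    · refine hA ?_ (h3 f.1 f.2)
      intro v hv
      simp only [ssupp, Set.mem_setOf_eq, Set.mem_union] at hv ⊢
      by_contra hc
      push_neg at hc
      apply hv
      rw [hc.1, hc.2]; ring
  have hrfeq : ∀ f : (sgeom A' : Set (V → ℝ)), r f.1 = f.1 := fun f => h2 f.1 f.2
  have hcont : Continuous fun p : unitInterval × (sgeom A : Set (V → ℝ)) =>
      (fun v => (1 - (p.1 : ℝ)) * r p.2.1 v + (p.1 : ℝ) * p.2.1 v) := by
    apply continuous_pi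
    intro v
    have hc1 : Continuous fun p : unitInterval × (sgeom A : Set (V → ℝ)) => (p.1 : ℝ) :=
      continuous_subtype_val.comp continuous_fst
    have hc2 : Continuous fun p : unitInterval × (sgeom A : Set (V → ℝ)) => r p.2.1 v :=
      (continuous_apply v).comp (hr.comp (continuous_subtype_val.comp continuous_snd))
    have hc3 : Continuous fun p : unitInterval × (sgeom A : Set (V → ℝ)) => p.2.1 v :=
      (continuous_apply v).comp (continuous_subtype_val.comp continuous_snd)
    continuity
  have H : ContinuousMap.Homotopy (G.comp F) (ContinuousMap.id _) :=
    { toFun := fun p => ⟨fun v => (1 - (p.1 : ℝ)) * r p.2.1 v + (p.1 : ℝ) * p.2.1 v,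
        hmem p.1 p.2⟩
      continuous_toFun := hcont.subtype_mk _
      map_zero_left := by
        intro f
        apply Subtype.ext
        funext v
        simp [F, G]
      map_one_left := by
        intro f
        apply Subtype.ext
        funext v
        simp }
  refine ⟨⟨F, G, ⟨H⟩, ?_⟩⟩
  have : F.comp G = ContinuousMap.id _ := by
    apply ContinuousMap.ext
    intro f
    apply Subtype.ext
    simp [F, G, hrfeq f]
  rw [this]



def reidx {V V' : Type*} [Fintype V] [Fintype V']
    (e : V' → V) (he : Function.Injective e)
    (A : Set V → Prop) (A' : Set V' → Prop)
    (hcorr : ∀ σ : Set V', (A (e '' σ) ↔ A' σ))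
    (hrange : ∀ s, A s → s ⊆ Set.range e) :
    (sgeom A : Set (V → ℝ)) ≃ₜ (sgeom A' : Set (V' → ℝ)) := by
  have key : ∀ f ∈ sgeom A, ∀ v, v ∉ Set.range e → f v = 0 := by
    intro f hf v hv
    by_contra h
    exact hv (hrange _ hf.2.2 h)
  have sum_ext : ∀ g : V' → ℝ, (∑ v, Function.extend e g 0 v) = ∑ v', g v' := by
    intro g
    have h1 : (∑ v, Function.extend e g 0 v) = ∑ v ∈ Finset.univ.image e,
        Function.extend e g 0 v := by
      refine (Finset.sum_subset (Finset.subset_univ _) ?_).symm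
      intro v _ hv
      rw [Function.extend_apply' _ _ _ ?_]
      · rfl
      · rintro ⟨a, rfl⟩
        exact hv (Finset.mem_image_of_mem e (Finset.mem_univ a))
    rw [h1, Finset.sum_image (fun a _ b _ h => he h)]
    exact Finset.sum_congr rfl fun a _ => he.extend_apply g 0 a
  have supp_ext : ∀ g : V' → ℝ, ssupp (Function.extend e g 0) = e '' ssupp g := by
    intro g
    ext v
    simp only [ssupp, Set.mem_setOf_eq, Set.mem_image]
    constructor
    · intro h
      rcases em (∃ a, e a = v) with ⟨a, rfl⟩ | hn
      · exact ⟨a, by rwa [he.extend_apply g 0 a] at h, rfl⟩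
      · rw [Function.extend_apply' _ _ _ hn] at h
        exact absurd rfl h
    · rintro ⟨a, ha, rfl⟩
      rwa [he.extend_apply g 0 a]
  have memA' : ∀ f ∈ sgeom A, (f ∘ e) ∈ sgeom A' := by
    intro f hf
    refine ⟨fun v' => hf.1 (e v'), ?_, ?_⟩
    · have h1 : (∑ v, f v) = ∑ v ∈ Finset.univ.image e, f v := by
        refine (Finset.sum_subset (Finset.subset_univ _) ?_).symm
        intro v _ hv
        refine key f hf v ?_
        rintro ⟨a, rfl⟩
        exact hv (Finset.mem_image_of_mem e (Finset.mem_univ a))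
      have h2 := hf.2.1
      rw [h1, Finset.sum_image (fun a _ b _ h => he h)] at h2
      exact h2
    · have : e '' ssupp (f ∘ e) = ssupp f := by
        ext v
        simp only [ssupp, Set.mem_image, Set.mem_setOf_eq, Function.comp_apply]
        constructor
        · rintro ⟨a, ha, rfl⟩; exact ha
        · intro h
          rcases hrange _ hf.2.2 h with ⟨a, rfl⟩
          exact ⟨a, h, rfl⟩
      rw [← hcorr, this]
      exact hf.2.2
  have memA : ∀ g ∈ sgeom A', Function.extend e g 0 ∈ sgeom A := by
    intro g hg
    refine ⟨?_, ?_, ?_⟩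
    · intro v
      rcases em (∃ a, e a = v) with ⟨a, rfl⟩ | hn
      · rw [he.extend_apply g 0 a]; exact hg.1 a
      · rw [Function.extend_apply' _ _ _ hn]; exact le_refl 0
    · rw [sum_ext]; exact hg.2.1
    · rw [supp_ext, hcorr]; exact hg.2.2
  refine
    { toFun := fun f => ⟨f.1 ∘ e, memA' f.1 f.2⟩
      invFun := fun g => ⟨Function.extend e g.1 0, memA g.1 g.2⟩
      left_inv := ?_
      right_inv := ?_
      continuous_toFun := ?_
      continuous_invFun := ?_ }
  · intro f
    apply Subtype.ext
    funext v
    show Function.extend e (f.1 ∘ e) 0 v = f.1 v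
    rcases em (∃ a, e a = v) with ⟨a, rfl⟩ | hn
    · exact he.extend_apply (f.1 ∘ e) (0 : V → ℝ) a
    · rw [Function.extend_apply' (f.1 ∘ e) (0 : V → ℝ) _ hn]
      exact (key f.1 f.2 v (fun h => hn h)).symm
  · intro g
    apply Subtype.ext
    funext a
    show (Function.extend e g.1 0) (e a) = g.1 a
    exact he.extend_apply g.1 (0 : V → ℝ) a
  · refine Continuous.subtype_mk ?_ _
    exact continuous_pi fun v' => (continuous_apply (e v')).comp continuous_subtype_val
  · apply Continuous.subtype_mk
    apply continuous_pi
    intro v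
    rcases em (∃ a, e a = v) with h | hn
    · have : (fun g : (sgeom A' : Set (V' → ℝ)) => Function.extend e g.1 0 v)
          = fun g => g.1 h.choose := by
        funext g
        rw [Function.extend_def, dif_pos h]
      rw [this]
      exact (continuous_apply _).comp continuous_subtype_val
    · have : (fun g : (sgeom A' : Set (V' → ℝ)) => Function.extend e g.1 0 v)
          = fun _ => 0 := by
        funext g
        rw [Function.extend_def, dif_neg hn]
        rfl
      rw [this]
      exact continuous_const

variable (k : ℕ)

abbrev Vp := Fin (k+4) ⊕ Unit

def z : Fin (k+4) := ⟨0, by omega⟩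
def ve : Fin (k+4) := ⟨k, by omega⟩
def vA : Fin (k+4) := ⟨k+1, by omega⟩
def vB : Fin (k+4) := ⟨k+2, by omega⟩
def vC : Fin (k+4) := ⟨k+3, by omega⟩
def Q : Vp k := Sum.inr ()

@[simp] lemma z_val : (z k).1 = 0 := rfl
@[simp] lemma ve_val : (ve k).1 = k := rfl
@[simp] lemma vA_val : (vA k).1 = k+1 := rfl
@[simp] lemma vB_val : (vB k).1 = k+2 := rfl
@[simp] lemma vC_val : (vC k).1 = k+3 := rfl

variable {k}

lemma mod_char {a : ℕ} (m : ℕ) (h : a < m) : (a + 1) % m = if a + 1 = m then 0 else a + 1 := by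
  split
  · rename_i he
    rw [he, Nat.mod_self]
  · exact Nat.mod_eq_of_lt (by omega)

lemma cyc_char (u v : Fin (k+4)) :
    cycRel (k+4) u v ↔
      (u.1 + 1 = v.1 ∨ v.1 + 1 = u.1 ∨ (u.1 = k+3 ∧ v.1 = 0) ∨ (v.1 = k+3 ∧ u.1 = 0)) := by
  have hu := u.2
  have hv := v.2
  show ((u.1 + 1) % (k+4) = v.1 ∨ (v.1 + 1) % (k+4) = u.1) ↔ _
  rw [mod_char (k+4) hu, mod_char (k+4) hv]
  split_ifs <;> omega

lemma cyc_char1 (u v : Fin (k+1)) :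
    cycRel (k+1) u v ↔
      (u.1 + 1 = v.1 ∨ v.1 + 1 = u.1 ∨ (u.1 = k ∧ v.1 = 0) ∨ (v.1 = k ∧ u.1 = 0)) := by
  have hu := u.2
  have hv := v.2
  show ((u.1 + 1) % (k+1) = v.1 ∨ (v.1 + 1) % (k+1) = u.1) ↔ _
  rw [mod_char (k+1) hu, mod_char (k+1) hv]
  split_ifs <;> omega

lemma cyc_comm {u v : Fin (k+4)} : cycRel (k+4) u v ↔ cycRel (k+4) v u := or_comm

lemma cyc_loop (u : Fin (k+4)) : ¬cycRel (k+4) u u := by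
  rw [cyc_char]; have := u.2; omega

lemma cyc_vA (u : Fin (k+4)) : cycRel (k+4) (vA k) u ↔ (u.1 = k ∨ u.1 = k+2) := by
  rw [cyc_char]; have := u.2; simp only [vA_val, true_and, and_true]; omega

lemma cyc_vB (u : Fin (k+4)) : cycRel (k+4) (vB k) u ↔ (u.1 = k+1 ∨ u.1 = k+3) := by
  rw [cyc_char]; have := u.2; simp only [vB_val, true_and, and_true]; omega

lemma cyc_vC (u : Fin (k+4)) : cycRel (k+4) (vC k) u ↔ (u.1 = k+2 ∨ u.1 = 0) := by
  rw [cyc_char]; have := u.2; simp only [vC_val, true_and, and_true]; omega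

lemma cyc_low {u v : Fin (k+4)} (hu : u.1 ≤ k) (hv : v.1 ≤ k) :
    cycRel (k+4) u v ↔ (u.1 + 1 = v.1 ∨ v.1 + 1 = u.1) := by
  rw [cyc_char]; omega

variable (k)

def ind (σ : Set (Fin (k+4))) : Prop := ∀ u ∈ σ, ∀ v ∈ σ, ¬cycRel (k+4) u v
def acomp (σ : Set (Fin (k+4))) : Prop := ∀ u ∈ σ, ¬cycRel (k+4) (vA k) u
def ccomp (σ : Set (Fin (k+4))) : Prop := ∀ u ∈ σ, ¬cycRel (k+4) (vC k) u

def sl (s : Set (Vp k)) : Set (Fin (k+4)) := {i | Sum.inl i ∈ s}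

def AXp (s : Set (Vp k)) : Prop :=
  ind k (sl k s) ∧ (Q k ∈ s → (acomp k (sl k s) ∨ ccomp k (sl k s)))
def Aac (s : Set (Vp k)) : Prop := ind k (sl k s) ∧ (Q k ∈ s → ccomp k (sl k s))
def AX (s : Set (Vp k)) : Prop := ind k (sl k s) ∧ Q k ∉ s
def A1 (s : Set (Vp k)) : Prop := AXp k s ∧ Sum.inl (vA k) ∉ s
def AZ (s : Set (Vp k)) : Prop := AXp k s ∧ Sum.inl (vA k) ∉ s ∧ Sum.inl (vC k) ∉ s
def AY (s : Set (Vp k)) : Prop :=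
  AZ k s ∧ (Sum.inl (z k) ∉ s ∨ Sum.inl (ve k) ∉ s) ∧ (Q k ∈ s → Sum.inl (vB k) ∉ s)

variable {k}

lemma sl_mono {s t : Set (Vp k)} (h : s ⊆ t) : sl k s ⊆ sl k t := fun _ hu => h hu

lemma ind_mono {σ τ : Set (Fin (k+4))} (h : σ ⊆ τ) (hi : ind k τ) : ind k σ :=
  fun u hu v hv => hi u (h hu) v (h hv)
lemma acomp_mono {σ τ : Set (Fin (k+4))} (h : σ ⊆ τ) (hi : acomp k τ) : acomp k σ :=
  fun u hu => hi u (h hu)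
lemma ccomp_mono {σ τ : Set (Fin (k+4))} (h : σ ⊆ τ) (hi : ccomp k τ) : ccomp k σ :=
  fun u hu => hi u (h hu)

lemma AXp_mono : ∀ ⦃s t : Set (Vp k)⦄, s ⊆ t → AXp k t → AXp k s := by
  intro s t h ht
  refine ⟨ind_mono (sl_mono h) ht.1, fun hQ => ?_⟩
  rcases ht.2 (h hQ) with h'|h'
  · exact Or.inl (acomp_mono (sl_mono h) h')
  · exact Or.inr (ccomp_mono (sl_mono h) h')

lemma Aac_mono : ∀ ⦃s t : Set (Vp k)⦄, s ⊆ t → Aac k t → Aac k s := by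
  intro s t h ht
  exact ⟨ind_mono (sl_mono h) ht.1, fun hQ => ccomp_mono (sl_mono h) (ht.2 (h hQ))⟩

lemma A1_mono : ∀ ⦃s t : Set (Vp k)⦄, s ⊆ t → A1 k t → A1 k s := by
  intro s t h ht
  exact ⟨AXp_mono h ht.1, fun hs => ht.2 (h hs)⟩

lemma AZ_mono : ∀ ⦃s t : Set (Vp k)⦄, s ⊆ t → AZ k t → AZ k s := by
  intro s t h ht
  exact ⟨AXp_mono h ht.1, fun hs => ht.2.1 (h hs), fun hs => ht.2.2 (h hs)⟩

lemma ind_extend {σ : Set (Fin (k+4))} {w : Fin (k+4)} (hind : ind k σ)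
    (hw : ∀ u ∈ σ, ¬cycRel (k+4) w u) : ind k (σ ∪ {w}) := by
  intro u hu v hv
  rcases hu with hu|hu <;> rcases hv with hv|hv
  · exact hind u hu v hv
  · rw [Set.mem_singleton_iff] at hv; subst hv
    rw [cyc_comm]; exact hw u hu
  · rw [Set.mem_singleton_iff] at hu; subst hu
    exact hw v hv
  · rw [Set.mem_singleton_iff] at hu hv; subst hu; subst hv
    exact cyc_loop _

lemma sl_union_inl (s : Set (Vp k)) (w : Fin (k+4)) :
    sl k (s ∪ {Sum.inl w}) = sl k s ∪ {w} := by
  ext u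
  simp [sl, Sum.inl.injEq]

lemma sl_union_Q (s : Set (Vp k)) : sl k (s ∪ {Q k}) = sl k s := by
  ext u
  simp [sl, Q]


variable (k)

def fold (p q : Vp k) (x : Vp k → ℝ) : Vp k → ℝ := fun v =>
  x v + (if v = p then -(x p) else 0) + (if v = q then x p else 0)

def mu1 (x : Vp k → ℝ) : ℝ := min (x (Sum.inl (z k))) (x (Q k))

def ra1 (x : Vp k → ℝ) : Vp k → ℝ := fun v =>
  x v + (if v = Sum.inl (z k) then -(mu1 k x) else 0) + (if v = Q k then -(mu1 k x) else 0)
    + (if v = Sum.inl (vA k) then 2 * mu1 k x else 0)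

def mu2 (x : Vp k → ℝ) : ℝ := min (x (Sum.inl (z k))) (x (Sum.inl (ve k)))

def rZ (x : Vp k → ℝ) : Vp k → ℝ := fun v =>
  x v + (if v = Sum.inl (z k) then -(mu2 k x) else 0)
      + (if v = Sum.inl (ve k) ∧ k ≠ 0 then -(mu2 k x) else 0)
      + (if v = Sum.inl (vB k) then (if k = 0 then 1 else 2) * mu2 k x else 0)

variable {k}

lemma fold_cont (p q : Vp k) : Continuous (fold k p q) := by
  apply continuous_pi
  intro v
  by_cases hp : v = p <;> by_cases hq : v = q <;>
    simp [fold, hp, hq] <;> (try split_ifs) <;> fun_prop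

lemma mu1_cont : Continuous (mu1 k) := by
  unfold mu1; fun_prop

lemma mu2_cont : Continuous (mu2 k) := by
  unfold mu2; fun_prop

lemma ra1_cont : Continuous (ra1 k) := by
  apply continuous_pi
  intro v
  unfold ra1
  have h1 := mu1_cont (k := k)
  split_ifs <;> fun_prop

lemma rZ_cont : Continuous (rZ k) := by
  apply continuous_pi
  intro v
  unfold rZ
  have h1 := mu2_cont (k := k)
  split_ifs <;> fun_prop

lemma fold_sum (p q : Vp k) (hpq : p ≠ q) (x : Vp k → ℝ) :
    ∑ v, fold k p q x v = ∑ v, x v := by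
  unfold fold
  rw [Finset.sum_add_distrib, Finset.sum_add_distrib,
    Finset.sum_ite_eq' Finset.univ p (fun _ => -(x p)),
    Finset.sum_ite_eq' Finset.univ q (fun _ => x p)]
  simp

lemma ra1_sum (x : Vp k → ℝ) : ∑ v, ra1 k x v = ∑ v, x v := by
  unfold ra1
  rw [Finset.sum_add_distrib, Finset.sum_add_distrib, Finset.sum_add_distrib,
    Finset.sum_ite_eq' Finset.univ (Sum.inl (z k)) (fun _ => -(mu1 k x)),
    Finset.sum_ite_eq' Finset.univ (Q k) (fun _ => -(mu1 k x)),
    Finset.sum_ite_eq' Finset.univ (Sum.inl (vA k)) (fun _ => 2 * mu1 k x)]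
  simp
  ring

lemma rZ_sum (x : Vp k → ℝ) : ∑ v, rZ k x v = ∑ v, x v := by
  unfold rZ
  rw [Finset.sum_add_distrib, Finset.sum_add_distrib, Finset.sum_add_distrib,
    Finset.sum_ite_eq' Finset.univ (Sum.inl (z k)) (fun _ => -(mu2 k x)),
    Finset.sum_ite_eq' Finset.univ (Sum.inl (vB k)) (fun _ => (if k = 0 then 1 else 2) * mu2 k x)]
  by_cases hk : k = 0
  · have : ∀ v : Vp k, (if v = Sum.inl (ve k) ∧ k ≠ 0 then -(mu2 k x) else 0) = 0 := by
      intro v; rw [if_neg]; rintro ⟨-, h⟩; exact h hk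
    rw [Finset.sum_congr rfl (fun v _ => this v)]
    simp [hk]
  · have : ∀ v : Vp k, (if v = Sum.inl (ve k) ∧ k ≠ 0 then -(mu2 k x) else 0)
        = (if v = Sum.inl (ve k) then -(mu2 k x) else 0) := by
      intro v
      by_cases hv : v = Sum.inl (ve k)
      · rw [if_pos ⟨hv, hk⟩, if_pos hv]
      · rw [if_neg (fun h => hv h.1), if_neg hv]
    rw [Finset.sum_congr rfl (fun v _ => this v),
      Finset.sum_ite_eq' Finset.univ (Sum.inl (ve k)) (fun _ => -(mu2 k x))]
    simp [hk]
    ring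

lemma mem_ssupp {W : Type*} [Fintype W] {f : W → ℝ} {v : W} : v ∈ ssupp f ↔ f v ≠ 0 := Iff.rfl

lemma not_mem_ssupp {W : Type*} [Fintype W] {f : W → ℝ} {v : W} : v ∉ ssupp f ↔ f v = 0 := by
  simp [ssupp]

lemma inl_ne_Q (u : Fin (k+4)) : (Sum.inl u : Vp k) ≠ Q k := by simp [Q]

lemma z_ne_vA : z k ≠ vA k := Fin.ne_of_val_ne (show 0 ≠ k+1 by omega)
lemma z_ne_vB : z k ≠ vB k := Fin.ne_of_val_ne (show 0 ≠ k+2 by omega)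
lemma z_ne_vC : z k ≠ vC k := Fin.ne_of_val_ne (show 0 ≠ k+3 by omega)
lemma ve_ne_vA : ve k ≠ vA k := Fin.ne_of_val_ne (show k ≠ k+1 by omega)
lemma ve_ne_vB : ve k ≠ vB k := Fin.ne_of_val_ne (show k ≠ k+2 by omega)
lemma ve_ne_vC : ve k ≠ vC k := Fin.ne_of_val_ne (show k ≠ k+3 by omega)
lemma vA_ne_vB : vA k ≠ vB k := Fin.ne_of_val_ne (show k+1 ≠ k+2 by omega)
lemma vA_ne_vC : vA k ≠ vC k := Fin.ne_of_val_ne (show k+1 ≠ k+3 by omega)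
lemma vB_ne_vC : vB k ≠ vC k := Fin.ne_of_val_ne (show k+2 ≠ k+3 by omega)

lemma eq_z_of_val {u : Fin (k+4)} (h : u.1 = 0) : u = z k := Fin.val_injective h
lemma eq_ve_of_val {u : Fin (k+4)} (h : u.1 = k) : u = ve k := Fin.val_injective h
lemma eq_vA_of_val {u : Fin (k+4)} (h : u.1 = k+1) : u = vA k := Fin.val_injective h
lemma eq_vB_of_val {u : Fin (k+4)} (h : u.1 = k+2) : u = vB k := Fin.val_injective h
lemma eq_vC_of_val {u : Fin (k+4)} (h : u.1 = k+3) : u = vC k := Fin.val_injective h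

lemma fold_apply_p {p q : Vp k} (hpq : p ≠ q) (x : Vp k → ℝ) : fold k p q x p = 0 := by
  simp [fold, hpq]

lemma fold_apply_q {p q : Vp k} (hpq : p ≠ q) (x : Vp k → ℝ) :
    fold k p q x q = x q + x p := by
  simp [fold, Ne.symm hpq]

lemma fold_apply_other {p q v : Vp k} (hvp : v ≠ p) (hvq : v ≠ q) (x : Vp k → ℝ) :
    fold k p q x v = x v := by
  simp [fold, hvp, hvq]

lemma fold_eq_self {p : Vp k} (q : Vp k) {x : Vp k → ℝ} (hxp : x p = 0) :
    fold k p q x = x := by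
  funext v
  simp [fold, hxp]

lemma min_zero_cases {a b : ℝ} (h : min a b = 0) : a = 0 ∨ b = 0 := by
  rcases le_total a b with h'|h'
  · left; rwa [min_eq_left h'] at h
  · right; rwa [min_eq_right h'] at h

lemma ne_zero_of_min {a b : ℝ} (ha : 0 ≤ a) (hb : 0 ≤ b) (h : min a b ≠ 0) :
    a ≠ 0 ∧ b ≠ 0 := by
  constructor
  · intro h'; exact h (by rw [h']; exact min_eq_left hb)
  · intro h'; exact h (by rw [h']; exact min_eq_right ha)

lemma equiv_foldaQ :
    Nonempty (ContinuousMap.HomotopyEquiv (sgeom (AXp k)) (sgeom (A1 k))) := by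
  have hd : (Sum.inl (vA k) : Vp k) ≠ Q k := inl_ne_Q _
  apply ret (AXp k) (A1 k) AXp_mono (fun s h => h.1)
    (fold k (Sum.inl (vA k)) (Q k)) (fold_cont _ _)
  · -- h1
    intro x hx
    have hpos := hx.1
    have hsum := hx.2.1
    have hind := hx.2.2.1
    have hQW := hx.2.2.2
    refine ⟨?_, ?_, ?_⟩
    · intro v
      by_cases hp : v = Sum.inl (vA k)
      · rw [hp, fold_apply_p hd]
      · by_cases hq : v = Q k
        · rw [hq, fold_apply_q hd]
          exact add_nonneg (hpos _) (hpos _)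
        · rw [fold_apply_other hp hq]; exact hpos v
    · rw [fold_sum _ _ hd]; exact hsum
    · by_cases hA0 : x (Sum.inl (vA k)) = 0
      · rw [fold_eq_self _ hA0]
        exact ⟨hx.2.2, not_mem_ssupp.mpr hA0⟩
      · have hAs : Sum.inl (vA k) ∈ ssupp x := hA0
        have hacomp : acomp k (sl k (ssupp x)) := fun u hu => hind (vA k) hAs u hu
        have hsub' : ssupp (fold k (Sum.inl (vA k)) (Q k) x) ⊆ ssupp x ∪ {Q k} := by
          intro v hv
          by_cases hq : v = Q k
          · right; rw [hq]; rfl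
          · left
            by_cases hp : v = Sum.inl (vA k)
            · exfalso; rw [mem_ssupp, hp, fold_apply_p hd] at hv; exact hv rfl
            · rw [mem_ssupp]; rw [mem_ssupp, fold_apply_other hp hq] at hv; exact hv
        refine ⟨AXp_mono hsub' ⟨?_, ?_⟩, ?_⟩
        · rw [sl_union_Q]; exact hind
        · intro _; rw [sl_union_Q]; exact Or.inl hacomp
        · rw [not_mem_ssupp, fold_apply_p hd]
  · -- h2
    intro x hx
    exact fold_eq_self _ (not_mem_ssupp.mp hx.2.2.2)
  · -- h3
    intro x hx
    have hpos := hx.1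
    have hsum := hx.2.1
    have hind := hx.2.2.1
    have hQW := hx.2.2.2
    by_cases hA0 : x (Sum.inl (vA k)) = 0
    · rw [fold_eq_self _ hA0, Set.union_self]; exact hx.2.2
    · have hAs : Sum.inl (vA k) ∈ ssupp x := hA0
      have hacomp : acomp k (sl k (ssupp x)) := fun u hu => hind (vA k) hAs u hu
      have hsub' : ssupp (fold k (Sum.inl (vA k)) (Q k) x) ⊆ ssupp x ∪ {Q k} := by
        intro v hv
        by_cases hq : v = Q k
        · right; rw [hq]; rfl
        · left
          by_cases hp : v = Sum.inl (vA k)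
          · exfalso; rw [mem_ssupp, hp, fold_apply_p hd] at hv; exact hv rfl
          · rw [mem_ssupp]; rw [mem_ssupp, fold_apply_other hp hq] at hv; exact hv
      refine AXp_mono (Set.union_subset Set.subset_union_left hsub') ⟨?_, ?_⟩
      · rw [sl_union_Q]; exact hind
      · intro _; rw [sl_union_Q]; exact Or.inl hacomp

lemma equiv_foldcQ :
    Nonempty (ContinuousMap.HomotopyEquiv (sgeom (A1 k)) (sgeom (AZ k))) := by
  have hd : (Sum.inl (vC k) : Vp k) ≠ Q k := inl_ne_Q _
  apply ret (A1 k) (AZ k) A1_mono (fun s h => ⟨h.1, h.2.1⟩)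
    (fold k (Sum.inl (vC k)) (Q k)) (fold_cont _ _)
  · -- h1
    intro x hx
    have hpos := hx.1
    have hind := hx.2.2.1.1
    have hnA := hx.2.2.2
    refine ⟨?_, ?_, ?_⟩
    · intro v
      by_cases hp : v = Sum.inl (vC k)
      · rw [hp, fold_apply_p hd]
      · by_cases hq : v = Q k
        · rw [hq, fold_apply_q hd]
          exact add_nonneg (hpos _) (hpos _)
        · rw [fold_apply_other hp hq]; exact hpos v
    · rw [fold_sum _ _ hd]; exact hx.2.1
    · by_cases hC0 : x (Sum.inl (vC k)) = 0
      · rw [fold_eq_self _ hC0]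
        exact ⟨hx.2.2.1, hnA, not_mem_ssupp.mpr hC0⟩
      · have hCs : Sum.inl (vC k) ∈ ssupp x := hC0
        have hccomp : ccomp k (sl k (ssupp x)) := fun u hu => hind (vC k) hCs u hu
        have hsub' : ssupp (fold k (Sum.inl (vC k)) (Q k) x) ⊆ ssupp x ∪ {Q k} := by
          intro v hv
          by_cases hq : v = Q k
          · right; rw [hq]; rfl
          · left
            by_cases hp : v = Sum.inl (vC k)
            · exfalso; rw [mem_ssupp, hp, fold_apply_p hd] at hv; exact hv rfl
            · rw [mem_ssupp]; rw [mem_ssupp, fold_apply_other hp hq] at hv; exact hv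
        refine ⟨AXp_mono hsub' ⟨?_, ?_⟩, ?_, ?_⟩
        · rw [sl_union_Q]; exact hind
        · intro _; rw [sl_union_Q]; exact Or.inr hccomp
        · intro hmem
          rcases hsub' hmem with h | h
          · exact hnA h
          · exact inl_ne_Q _ h
        · rw [not_mem_ssupp, fold_apply_p hd]
  · -- h2
    intro x hx
    exact fold_eq_self _ (not_mem_ssupp.mp hx.2.2.2.2)
  · -- h3
    intro x hx
    have hind := hx.2.2.1.1
    by_cases hC0 : x (Sum.inl (vC k)) = 0
    · rw [fold_eq_self _ hC0, Set.union_self]; exact hx.2.2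
    · have hCs : Sum.inl (vC k) ∈ ssupp x := hC0
      have hccomp : ccomp k (sl k (ssupp x)) := fun u hu => hind (vC k) hCs u hu
      have hsub' : ssupp (fold k (Sum.inl (vC k)) (Q k) x) ⊆ ssupp x ∪ {Q k} := by
        intro v hv
        by_cases hq : v = Q k
        · right; rw [hq]; rfl
        · left
          by_cases hp : v = Sum.inl (vC k)
          · exfalso; rw [mem_ssupp, hp, fold_apply_p hd] at hv; exact hv rfl
          · rw [mem_ssupp]; rw [mem_ssupp, fold_apply_other hp hq] at hv; exact hv
      refine A1_mono (Set.union_subset Set.subset_union_left hsub') ⟨⟨?_, ?_⟩, ?_⟩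
      · rw [sl_union_Q]; exact hind
      · intro _; rw [sl_union_Q]; exact Or.inr hccomp
      · intro hmem
        rcases hmem with h | h
        · exact hx.2.2.2 h
        · exact inl_ne_Q _ h

lemma equiv_foldQc :
    Nonempty (ContinuousMap.HomotopyEquiv (sgeom (Aac k)) (sgeom (AX k))) := by
  have hd : (Q k : Vp k) ≠ Sum.inl (vC k) := (inl_ne_Q _).symm
  apply ret (Aac k) (AX k) Aac_mono (fun s h => ⟨h.1, fun hQ => absurd hQ h.2⟩)
    (fold k (Q k) (Sum.inl (vC k))) (fold_cont _ _)
  · -- h1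
    intro x hx
    have hpos := hx.1
    have hind := hx.2.2.1
    have hQW := hx.2.2.2
    refine ⟨?_, ?_, ?_⟩
    · intro v
      by_cases hp : v = Q k
      · rw [hp, fold_apply_p hd]
      · by_cases hq : v = Sum.inl (vC k)
        · rw [hq, fold_apply_q hd]
          exact add_nonneg (hpos _) (hpos _)
        · rw [fold_apply_other hp hq]; exact hpos v
    · rw [fold_sum _ _ hd]; exact hx.2.1
    · by_cases hQ0 : x (Q k) = 0
      · rw [fold_eq_self _ hQ0]
        exact ⟨hind, not_mem_ssupp.mpr hQ0⟩
      · have hQs : Q k ∈ ssupp x := hQ0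
        have hccomp : ccomp k (sl k (ssupp x)) := hQW hQs
        have hsub' : ssupp (fold k (Q k) (Sum.inl (vC k)) x) ⊆ ssupp x ∪ {Sum.inl (vC k)} := by
          intro v hv
          by_cases hq : v = Sum.inl (vC k)
          · right; rw [hq]; rfl
          · left
            by_cases hp : v = Q k
            · exfalso; rw [mem_ssupp, hp, fold_apply_p hd] at hv; exact hv rfl
            · rw [mem_ssupp]; rw [mem_ssupp, fold_apply_other hp hq] at hv; exact hv
        refine ⟨?_, ?_⟩
        · refine ind_mono (sl_mono hsub') ?_
          rw [sl_union_inl]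
          exact ind_extend hind hccomp
        · rw [not_mem_ssupp, fold_apply_p hd]
  · -- h2
    intro x hx
    exact fold_eq_self _ (not_mem_ssupp.mp hx.2.2.2)
  · -- h3
    intro x hx
    have hind := hx.2.2.1
    have hQW := hx.2.2.2
    by_cases hQ0 : x (Q k) = 0
    · rw [fold_eq_self _ hQ0, Set.union_self]; exact hx.2.2
    · have hQs : Q k ∈ ssupp x := hQ0
      have hccomp : ccomp k (sl k (ssupp x)) := hQW hQs
      have hsub' : ssupp (fold k (Q k) (Sum.inl (vC k)) x) ⊆ ssupp x ∪ {Sum.inl (vC k)} := by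
        intro v hv
        by_cases hq : v = Sum.inl (vC k)
        · right; rw [hq]; rfl
        · left
          by_cases hp : v = Q k
          · exfalso; rw [mem_ssupp, hp, fold_apply_p hd] at hv; exact hv rfl
          · rw [mem_ssupp]; rw [mem_ssupp, fold_apply_other hp hq] at hv; exact hv
      refine Aac_mono (Set.union_subset Set.subset_union_left hsub') ⟨?_, ?_⟩
      · rw [sl_union_inl]
        exact ind_extend hind hccomp
      · intro _
        rw [sl_union_inl]
        intro u hu
        rcases hu with hu | hu
        · exact hccomp u hu
        · rw [Set.mem_singleton_iff] at hu; subst hu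
          exact cyc_loop _

lemma ra1_z (x : Vp k → ℝ) :
    ra1 k x (Sum.inl (z k)) = x (Sum.inl (z k)) - mu1 k x := by
  have h1 : (Sum.inl (z k) : Vp k) ≠ Q k := inl_ne_Q _
  have h2 : (Sum.inl (z k) : Vp k) ≠ Sum.inl (vA k) := by
    simp [z_ne_vA]
  simp [ra1, h1, h2]
  ring

lemma ra1_Q (x : Vp k → ℝ) : ra1 k x (Q k) = x (Q k) - mu1 k x := by
  have h1 : (Q k : Vp k) ≠ Sum.inl (z k) := (inl_ne_Q _).symm
  have h2 : (Q k : Vp k) ≠ Sum.inl (vA k) := (inl_ne_Q _).symm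
  simp [ra1, h1, h2]
  ring

lemma ra1_vA (x : Vp k → ℝ) :
    ra1 k x (Sum.inl (vA k)) = x (Sum.inl (vA k)) + 2 * mu1 k x := by
  have h1 : (Sum.inl (vA k) : Vp k) ≠ Sum.inl (z k) := by simp [(z_ne_vA (k := k)).symm]
  have h2 : (Sum.inl (vA k) : Vp k) ≠ Q k := inl_ne_Q _
  simp [ra1, h1, h2]

lemma ra1_other {v : Vp k} (h1 : v ≠ Sum.inl (z k)) (h2 : v ≠ Q k)
    (h3 : v ≠ Sum.inl (vA k)) (x : Vp k → ℝ) : ra1 k x v = x v := by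
  simp [ra1, h1, h2, h3]

lemma ra1_eq_self {x : Vp k → ℝ} (h : mu1 k x = 0) : ra1 k x = x := by
  funext v
  simp [ra1, h]

lemma equiv_ra1 :
    Nonempty (ContinuousMap.HomotopyEquiv (sgeom (AXp k)) (sgeom (Aac k))) := by
  apply ret (AXp k) (Aac k) AXp_mono
    (fun s h => ⟨h.1, fun hQ => Or.inr (h.2 hQ)⟩) (ra1 k) ra1_cont
  · -- h1
    intro x hx
    have hpos := hx.1
    have hind := hx.2.2.1
    have hQW := hx.2.2.2
    have hmu0 : 0 ≤ mu1 k x := le_min (hpos _) (hpos _)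
    refine ⟨?_, ?_, ?_⟩
    · intro v
      by_cases h1 : v = Sum.inl (z k)
      · rw [h1, ra1_z]
        have := min_le_left (x (Sum.inl (z k))) (x (Q k))
        simp only [mu1]
        linarith [min_le_left (x (Sum.inl (z k))) (x (Q k))]
      · by_cases h2 : v = Q k
        · rw [h2, ra1_Q]
          have := min_le_right (x (Sum.inl (z k))) (x (Q k))
          simp only [mu1]
          linarith
        · by_cases h3 : v = Sum.inl (vA k)
          · rw [h3, ra1_vA]
            linarith [hpos (Sum.inl (vA k))]
          · rw [ra1_other h1 h2 h3]; exact hpos v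
    · rw [ra1_sum]; exact hx.2.1
    · by_cases hmu : mu1 k x = 0
      · rw [ra1_eq_self hmu]
        refine ⟨hind, fun hQs => ?_⟩
        have hz0 : x (Sum.inl (z k)) = 0 := by
          rcases min_zero_cases hmu with h | h
          · exact h
          · exact absurd h hQs
        rcases hQW hQs with hac | hcc
        · intro u hu
          rw [cyc_vC]
          rintro (h | h)
          · exact hac u hu ((cyc_vA u).mpr (Or.inr h))
          · rw [eq_z_of_val h] at hu
            exact hu hz0
        · exact hcc
      · have hboth := ne_zero_of_min (hpos _) (hpos _) hmu
        have hzs : Sum.inl (z k) ∈ ssupp x := hboth.1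
        have hQs : Q k ∈ ssupp x := hboth.2
        have hacomp : acomp k (sl k (ssupp x)) := by
          rcases hQW hQs with h | h
          · exact h
          · exact absurd ((cyc_vC (z k)).mpr (Or.inr rfl)) (h (z k) hzs)
        have hsub' : ssupp (ra1 k x) ⊆ ssupp x ∪ {Sum.inl (vA k)} := by
          intro v hv
          by_cases h3 : v = Sum.inl (vA k)
          · right; rw [h3]; rfl
          · left
            by_cases h1 : v = Sum.inl (z k)
            · rw [h1]; exact hzs
            · by_cases h2 : v = Q k
              · rw [h2]; exact hQs
              · rw [mem_ssupp]; rw [mem_ssupp, ra1_other h1 h2 h3] at hv; exact hv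
        refine ⟨?_, ?_⟩
        · refine ind_mono (sl_mono hsub') ?_
          rw [sl_union_inl]
          exact ind_extend hind hacomp
        · intro hQ'
          have hmuz : mu1 k x = x (Sum.inl (z k)) := by
            rcases le_total (x (Sum.inl (z k))) (x (Q k)) with h | h
            · exact min_eq_left h
            · exfalso
              apply hQ'
              rw [ra1_Q, mu1, min_eq_right h]
              ring
          have hzgone : ra1 k x (Sum.inl (z k)) = 0 := by
            rw [ra1_z, hmuz]; ring
          intro u hu
          rw [cyc_vC]
          rintro (h | h)
          · have hu' := sl_mono hsub' hu
            rw [sl_union_inl] at hu'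
            rcases hu' with hu' | hu'
            · exact hacomp u hu' ((cyc_vA u).mpr (Or.inr h))
            · rw [Set.mem_singleton_iff] at hu'
              subst hu'
              simp at h
          · rw [eq_z_of_val h] at hu
            exact hu hzgone
  · -- h2
    intro x hx
    have hpos := hx.1
    apply ra1_eq_self
    by_cases hQ0 : x (Q k) = 0
    · rw [mu1, hQ0]
      exact min_eq_right (hpos _)
    · have hQs : Q k ∈ ssupp x := hQ0
      have hcc := hx.2.2.2 hQs
      have hz0 : x (Sum.inl (z k)) = 0 := by
        by_contra h
        exact hcc (z k) h ((cyc_vC (z k)).mpr (Or.inr rfl))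
      rw [mu1, hz0]
      exact min_eq_left (hpos _)
  · -- h3
    intro x hx
    have hpos := hx.1
    have hind := hx.2.2.1
    have hQW := hx.2.2.2
    by_cases hmu : mu1 k x = 0
    · rw [ra1_eq_self hmu, Set.union_self]; exact hx.2.2
    · have hboth := ne_zero_of_min (hpos _) (hpos _) hmu
      have hzs : Sum.inl (z k) ∈ ssupp x := hboth.1
      have hQs : Q k ∈ ssupp x := hboth.2
      have hacomp : acomp k (sl k (ssupp x)) := by
        rcases hQW hQs with h | h
        · exact h
        · exact absurd ((cyc_vC (z k)).mpr (Or.inr rfl)) (h (z k) hzs)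
      have hsub' : ssupp (ra1 k x) ⊆ ssupp x ∪ {Sum.inl (vA k)} := by
        intro v hv
        by_cases h3 : v = Sum.inl (vA k)
        · right; rw [h3]; rfl
        · left
          by_cases h1 : v = Sum.inl (z k)
          · rw [h1]; exact hzs
          · by_cases h2 : v = Q k
            · rw [h2]; exact hQs
            · rw [mem_ssupp]; rw [mem_ssupp, ra1_other h1 h2 h3] at hv; exact hv
      refine AXp_mono (Set.union_subset Set.subset_union_left hsub') ⟨?_, ?_⟩
      · rw [sl_union_inl]
        exact ind_extend hind hacomp
      · intro _
        rw [sl_union_inl]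
        refine Or.inl ?_
        intro u hu
        rcases hu with hu | hu
        · exact hacomp u hu
        · rw [Set.mem_singleton_iff] at hu; subst hu
          exact cyc_loop _

lemma not_second_if_z : ¬((Sum.inl (z k) : Vp k) = Sum.inl (ve k) ∧ k ≠ 0) := by
  rintro ⟨h, hk⟩
  apply hk
  have := congrArg Fin.val (Sum.inl.inj h)
  simpa using this.symm

lemma rZ_z (x : Vp k → ℝ) :
    rZ k x (Sum.inl (z k)) = x (Sum.inl (z k)) - mu2 k x := by
  have h3 : (Sum.inl (z k) : Vp k) ≠ Sum.inl (vB k) := by simp [z_ne_vB]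
  show _ + _ + _ + _ = _
  rw [if_pos rfl, if_neg not_second_if_z, if_neg h3]
  ring

lemma rZ_ve (hk : k ≠ 0) (x : Vp k → ℝ) :
    rZ k x (Sum.inl (ve k)) = x (Sum.inl (ve k)) - mu2 k x := by
  have h1 : (Sum.inl (ve k) : Vp k) ≠ Sum.inl (z k) := by
    simp only [ne_eq, Sum.inl.injEq]
    exact fun h => hk (by simpa using congrArg Fin.val h)
  have h3 : (Sum.inl (ve k) : Vp k) ≠ Sum.inl (vB k) := by simp [ve_ne_vB]
  show _ + _ + _ + _ = _
  rw [if_neg h1, if_pos ⟨rfl, hk⟩, if_neg h3]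
  ring

lemma rZ_vB (x : Vp k → ℝ) :
    rZ k x (Sum.inl (vB k)) = x (Sum.inl (vB k)) + (if k = 0 then 1 else 2) * mu2 k x := by
  have h1 : (Sum.inl (vB k) : Vp k) ≠ Sum.inl (z k) := by simp [(z_ne_vB (k := k)).symm]
  have h2 : ¬((Sum.inl (vB k) : Vp k) = Sum.inl (ve k) ∧ k ≠ 0) := by
    rintro ⟨h, -⟩
    exact (ve_ne_vB (k := k)).symm (Sum.inl.inj h)
  show _ + _ + _ + _ = _
  rw [if_neg h1, if_neg h2, if_pos rfl]
  ring

lemma rZ_other {v : Vp k} (h1 : v ≠ Sum.inl (z k)) (h2 : v ≠ Sum.inl (ve k))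
    (h3 : v ≠ Sum.inl (vB k)) (x : Vp k → ℝ) : rZ k x v = x v := by
  show _ + _ + _ + _ = _
  rw [if_neg h1, if_neg (fun h => h2 h.1), if_neg h3]
  ring

lemma rZ_eq_self {x : Vp k → ℝ} (h : mu2 k x = 0) : rZ k x = x := by
  funext v
  show _ + _ + _ + _ = _
  rw [h]
  split_ifs <;> ring

lemma equiv_rZ :
    Nonempty (ContinuousMap.HomotopyEquiv (sgeom (AZ k)) (sgeom (AY k))) := by
  apply ret (AZ k) (AY k) AZ_mono (fun s h => h.1) (rZ k) rZ_cont
  · -- h1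
    intro x hx
    have hpos := hx.1
    have hind := hx.2.2.1.1
    have hQW := hx.2.2.1.2
    have hnA := hx.2.2.2.1
    have hnC := hx.2.2.2.2
    have hmu0 : 0 ≤ mu2 k x := le_min (hpos _) (hpos _)
    refine ⟨?_, ?_, ?_⟩
    · intro v
      by_cases h1 : v = Sum.inl (z k)
      · rw [h1, rZ_z]
        have := min_le_left (x (Sum.inl (z k))) (x (Sum.inl (ve k)))
        simp only [mu2]
        linarith
      · by_cases h2 : v = Sum.inl (ve k)
        · have hk : k ≠ 0 := by
            intro hk0
            apply h1
            rw [h2]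
            congr 1
            exact Fin.val_injective (by simp [hk0])
          rw [h2, rZ_ve hk]
          have := min_le_right (x (Sum.inl (z k))) (x (Sum.inl (ve k)))
          simp only [mu2]
          linarith
        · by_cases h3 : v = Sum.inl (vB k)
          · rw [h3, rZ_vB]
            have hc : (0:ℝ) ≤ (if k = 0 then 1 else 2) := by split <;> norm_num
            have := hpos (Sum.inl (vB k))
            nlinarith
          · rw [rZ_other h1 h2 h3]; exact hpos v
    · rw [rZ_sum]; exact hx.2.1
    · by_cases hmu : mu2 k x = 0
      · rw [rZ_eq_self hmu]
        refine ⟨hx.2.2, ?_, ?_⟩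
        · rcases min_zero_cases hmu with h | h
          · exact Or.inl (not_mem_ssupp.mpr h)
          · exact Or.inr (not_mem_ssupp.mpr h)
        · intro hQs hBs
          rcases hQW hQs with hac | hcc
          · exact hac (vB k) hBs ((cyc_vA _).mpr (Or.inr rfl))
          · exact hcc (vB k) hBs ((cyc_vC _).mpr (Or.inl rfl))
      · have hboth := ne_zero_of_min (hpos _) (hpos _) hmu
        have hzs : Sum.inl (z k) ∈ ssupp x := hboth.1
        have hes : Sum.inl (ve k) ∈ ssupp x := hboth.2
        have hQnot : Q k ∉ ssupp x := by
          intro hQs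
          rcases hQW hQs with hac | hcc
          · exact hac (ve k) hes ((cyc_vA _).mpr (Or.inl rfl))
          · exact hcc (z k) hzs ((cyc_vC _).mpr (Or.inr rfl))
        have hbcomp : ∀ u ∈ sl k (ssupp x), ¬cycRel (k+4) (vB k) u := by
          intro u hu
          rw [cyc_vB]
          rintro (h | h)
          · rw [eq_vA_of_val h] at hu
            exact hnA hu
          · rw [eq_vC_of_val h] at hu
            exact hnC hu
        have hsub' : ssupp (rZ k x) ⊆ ssupp x ∪ {Sum.inl (vB k)} := by
          intro v hv
          by_cases h3 : v = Sum.inl (vB k)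
          · right; rw [h3]; rfl
          · left
            by_cases h1 : v = Sum.inl (z k)
            · rw [h1]; exact hzs
            · by_cases h2 : v = Sum.inl (ve k)
              · rw [h2]; exact hes
              · rw [mem_ssupp]; rw [mem_ssupp, rZ_other h1 h2 h3] at hv; exact hv
        have hAZbig : AZ k (ssupp x ∪ {Sum.inl (vB k)}) := by
          refine ⟨⟨?_, ?_⟩, ?_, ?_⟩
          · rw [sl_union_inl]
            exact ind_extend hind hbcomp
          · intro hQ'
            exfalso
            rcases hQ' with h | h
            · exact hQnot h
            · exact (inl_ne_Q (vB k)).symm h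
          · rintro (h | h)
            · exact hnA h
            · exact vA_ne_vB (Sum.inl.inj h)
          · rintro (h | h)
            · exact hnC h
            · exact vB_ne_vC.symm (Sum.inl.inj h)
        refine ⟨AZ_mono hsub' hAZbig, ?_, ?_⟩
        · by_cases hk : k = 0
          · have hvez : (Sum.inl (ve k) : Vp k) = Sum.inl (z k) := by
              congr 1
              exact Fin.val_injective (by simp [hk])
            left
            rw [not_mem_ssupp, rZ_z]
            have : mu2 k x = x (Sum.inl (z k)) := by
              rw [mu2, hvez, min_self]
            rw [this]; ring
          · rcases le_total (x (Sum.inl (z k))) (x (Sum.inl (ve k))) with h | h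
            · left
              rw [not_mem_ssupp, rZ_z]
              have : mu2 k x = x (Sum.inl (z k)) := min_eq_left h
              rw [this]; ring
            · right
              rw [not_mem_ssupp, rZ_ve hk]
              have : mu2 k x = x (Sum.inl (ve k)) := min_eq_right h
              rw [this]; ring
        · intro hQ'
          exfalso
          have hQo : rZ k x (Q k) = x (Q k) :=
            rZ_other (inl_ne_Q (z k)).symm (inl_ne_Q (ve k)).symm (inl_ne_Q (vB k)).symm x
          rw [mem_ssupp, hQo] at hQ'
          exact hQ' (not_mem_ssupp.mp hQnot)
  · -- h2
    intro x hx
    have hpos := hx.1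
    apply rZ_eq_self
    rcases hx.2.2.2.1 with h | h
    · rw [mu2, not_mem_ssupp.mp h]
      exact min_eq_left (hpos _)
    · rw [mu2, not_mem_ssupp.mp h]
      exact min_eq_right (hpos _)
  · -- h3
    intro x hx
    have hpos := hx.1
    have hind := hx.2.2.1.1
    have hQW := hx.2.2.1.2
    have hnA := hx.2.2.2.1
    have hnC := hx.2.2.2.2
    by_cases hmu : mu2 k x = 0
    · rw [rZ_eq_self hmu, Set.union_self]; exact hx.2.2
    · have hboth := ne_zero_of_min (hpos _) (hpos _) hmu
      have hzs : Sum.inl (z k) ∈ ssupp x := hboth.1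
      have hes : Sum.inl (ve k) ∈ ssupp x := hboth.2
      have hQnot : Q k ∉ ssupp x := by
        intro hQs
        rcases hQW hQs with hac | hcc
        · exact hac (ve k) hes ((cyc_vA _).mpr (Or.inl rfl))
        · exact hcc (z k) hzs ((cyc_vC _).mpr (Or.inr rfl))
      have hbcomp : ∀ u ∈ sl k (ssupp x), ¬cycRel (k+4) (vB k) u := by
        intro u hu
        rw [cyc_vB]
        rintro (h | h)
        · rw [eq_vA_of_val h] at hu
          exact hnA hu
        · rw [eq_vC_of_val h] at hu
          exact hnC hu
      have hsub' : ssupp (rZ k x) ⊆ ssupp x ∪ {Sum.inl (vB k)} := by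
        intro v hv
        by_cases h3 : v = Sum.inl (vB k)
        · right; rw [h3]; rfl
        · left
          by_cases h1 : v = Sum.inl (z k)
          · rw [h1]; exact hzs
          · by_cases h2 : v = Sum.inl (ve k)
            · rw [h2]; exact hes
            · rw [mem_ssupp]; rw [mem_ssupp, rZ_other h1 h2 h3] at hv; exact hv
      refine AZ_mono (Set.union_subset Set.subset_union_left hsub') ?_
      refine ⟨⟨?_, ?_⟩, ?_, ?_⟩
      · rw [sl_union_inl]
        exact ind_extend hind hbcomp
      · intro hQ'
        exfalso
        rcases hQ' with h | h
        · exact hQnot h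
        · exact (inl_ne_Q (vB k)).symm h
      · rintro (h | h)
        · exact hnA h
        · exact vA_ne_vB (Sum.inl.inj h)
      · rintro (h | h)
        · exact hnC h
        · exact vB_ne_vC.symm (Sum.inl.inj h)

lemma mem_sl {s : Set (Vp k)} {u : Fin (k+4)} : u ∈ sl k s ↔ Sum.inl u ∈ s := Iff.rfl

variable (k)

def e2 : Fin (k+1) ⊕ Fin 2 → Vp k :=
  Sum.elim (fun i => Sum.inl ⟨i.1, by omega⟩) (fun j => if j = 0 then Sum.inl (vB k) else Q k)

variable {k}

lemma fin2 (j : Fin 2) : j = 0 ∨ j = 1 := by revert j; decide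

lemma e2_inl (i : Fin (k+1)) : e2 k (Sum.inl i) = Sum.inl (⟨i.1, by omega⟩ : Fin (k+4)) := rfl

lemma e2_inr0 : e2 k (Sum.inr 0) = Sum.inl (vB k) := by
  simp [e2]

lemma e2_inr1 : e2 k (Sum.inr 1) = Q k := by
  simp only [e2, Sum.elim_inr]
  rw [if_neg (by decide)]

lemma e2_inj : Function.Injective (e2 k) := by
  intro a b h
  rcases a with i | j <;> rcases b with i' | j'
  · rw [e2_inl, e2_inl] at h
    have := congrArg Fin.val (Sum.inl.inj h)
    simp only at this
    exact congrArg Sum.inl (Fin.val_injective this)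
  · exfalso
    rcases fin2 j' with rfl | rfl
    · rw [e2_inl, e2_inr0] at h
      have := congrArg Fin.val (Sum.inl.inj h)
      simp only [vB_val] at this
      have := i.2; omega
    · rw [e2_inl, e2_inr1] at h
      exact inl_ne_Q _ h
  · exfalso
    rcases fin2 j with rfl | rfl
    · rw [e2_inl, e2_inr0] at h
      have := congrArg Fin.val (Sum.inl.inj h.symm)
      simp only [vB_val] at this
      have := i'.2; omega
    · rw [e2_inl, e2_inr1] at h
      exact inl_ne_Q _ h.symm
  · rcases fin2 j with rfl | rfl <;> rcases fin2 j' with rfl | rfl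
    · rfl
    · rw [e2_inr0, e2_inr1] at h; exact absurd h (inl_ne_Q _)
    · rw [e2_inr0, e2_inr1] at h; exact absurd h.symm (inl_ne_Q _)
    · rfl

lemma mem_image_inl {σ : Set (Fin (k+1) ⊕ Fin 2)} {u : Fin (k+4)} :
    Sum.inl u ∈ e2 k '' σ ↔
      ((∃ i : Fin (k+1), Sum.inl i ∈ σ ∧ u.1 = i.1) ∨ (u = vB k ∧ Sum.inr 0 ∈ σ)) := by
  constructor
  · rintro ⟨w, hw, he⟩
    rcases w with i | j
    · rw [e2_inl] at he
      left
      exact ⟨i, hw, (congrArg Fin.val (Sum.inl.inj he)).symm⟩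
    · rcases fin2 j with rfl | rfl
      · rw [e2_inr0] at he
        right
        exact ⟨(Sum.inl.inj he).symm, hw⟩
      · rw [e2_inr1] at he
        exact absurd he.symm (inl_ne_Q _)
  · rintro (⟨i, hi, hval⟩ | ⟨rfl, h0⟩)
    · refine ⟨Sum.inl i, hi, ?_⟩
      rw [e2_inl]
      exact congrArg Sum.inl (Fin.val_injective hval.symm)
    · exact ⟨Sum.inr 0, h0, e2_inr0⟩

lemma mem_image_Q {σ : Set (Fin (k+1) ⊕ Fin 2)} :
    Q k ∈ e2 k '' σ ↔ Sum.inr 1 ∈ σ := by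
  constructor
  · rintro ⟨w, hw, he⟩
    rcases w with i | j
    · rw [e2_inl] at he
      exact absurd he (inl_ne_Q _)
    · rcases fin2 j with rfl | rfl
      · rw [e2_inr0] at he
        exact absurd he (inl_ne_Q _)
      · exact hw
  · intro h
    exact ⟨Sum.inr 1, h, e2_inr1⟩

lemma e2_range {s : Set (Vp k)} (hs : AY k s) : s ⊆ Set.range (e2 k) := by
  intro v hv
  rcases v with u | w
  · have hnA := hs.1.2.1
    have hnC := hs.1.2.2
    have hu4 := u.2
    rcases Nat.lt_or_ge u.1 (k+1) with h | h
    · exact ⟨Sum.inl ⟨u.1, h⟩, by rw [e2_inl]⟩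
    · have : u.1 = k+1 ∨ u.1 = k+2 ∨ u.1 = k+3 := by omega
      rcases this with h' | h' | h'
      · exact absurd hv (by rw [eq_vA_of_val h']; exact hnA)
      · exact ⟨Sum.inr 0, by rw [e2_inr0, eq_vB_of_val h']⟩
      · exact absurd hv (by rw [eq_vC_of_val h']; exact hnC)
  · cases w
    exact ⟨Sum.inr 1, e2_inr1⟩

lemma corr1 (σ : Set (Fin (k+4))) :
    AX k (Sum.inl '' σ) ↔ (∀ u ∈ σ, ∀ v ∈ σ, ¬cycRel (k+4) u v) := by
  have hsl : sl k (Sum.inl '' σ) = σ := by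
    ext u
    simp [sl]
  have hQ : Q k ∉ (Sum.inl '' σ : Set (Vp k)) := by
    simp [Q]
  constructor
  · intro h
    have h1 := h.1
    rw [hsl] at h1
    exact h1
  · intro h
    refine ⟨?_, hQ⟩
    rw [hsl]
    exact h

lemma corr2 (σ : Set (Fin (k+1) ⊕ Fin 2)) :
    AY k (e2 k '' σ) ↔ (∀ a ∈ σ, ∀ b ∈ σ, ¬suspRel (cycRel (k+1)) a b) := by
  constructor
  · intro hA
    have hind := hA.1.1.1
    have hze := hA.2.1
    have hQB := hA.2.2
    intro a ha b hb
    rcases a with i | j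
    · rcases b with i' | j'
      · show ¬cycRel (k+1) i i'
        intro hcyc
        rw [cyc_char1] at hcyc
        have hiu : Sum.inl (⟨i.1, by omega⟩ : Fin (k+4)) ∈ e2 k '' σ := ⟨Sum.inl i, ha, rfl⟩
        have hi'u : Sum.inl (⟨i'.1, by omega⟩ : Fin (k+4)) ∈ e2 k '' σ := ⟨Sum.inl i', hb, rfl⟩
        have hii := i.2
        have hii' := i'.2
        rcases hcyc with h | h | h | h
        · exact hind _ hiu _ hi'u ((cyc_char _ _).mpr (Or.inl h))
        · exact hind _ hiu _ hi'u ((cyc_char _ _).mpr (Or.inr (Or.inl h)))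
        · rcases hze with hz | he
          · apply hz
            have hzeq : (⟨i'.1, by omega⟩ : Fin (k+4)) = z k := Fin.val_injective h.2
            rw [← hzeq]
            exact hi'u
          · apply he
            have heeq : (⟨i.1, by omega⟩ : Fin (k+4)) = ve k := Fin.val_injective h.1
            rw [← heeq]
            exact hiu
        · rcases hze with hz | he
          · apply hz
            have hzeq : (⟨i.1, by omega⟩ : Fin (k+4)) = z k := Fin.val_injective h.2
            rw [← hzeq]
            exact hiu
          · apply he
            have heeq : (⟨i'.1, by omega⟩ : Fin (k+4)) = ve k := Fin.val_injective h.1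
            rw [← heeq]
            exact hi'u
      · simp [suspRel]
    · rcases b with i' | j'
      · simp [suspRel]
      · show ¬(j ≠ j')
        intro hne
        rcases fin2 j with rfl | rfl <;> rcases fin2 j' with rfl | rfl
        · exact hne rfl
        · exact hQB (mem_image_Q.mpr hb) (mem_image_inl.mpr (Or.inr ⟨rfl, ha⟩))
        · exact hQB (mem_image_Q.mpr ha) (mem_image_inl.mpr (Or.inr ⟨rfl, hb⟩))
        · exact hne rfl
  · intro hS
    have hpole : ¬(Sum.inr 0 ∈ σ ∧ Sum.inr 1 ∈ σ) := by
      rintro ⟨h0, h1⟩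
      exact hS _ h0 _ h1 (show (0 : Fin 2) ≠ 1 by decide)
    have hends : ¬((Sum.inl (0 : Fin (k+1)) ∈ σ) ∧ (Sum.inl (⟨k, by omega⟩ : Fin (k+1)) ∈ σ)) := by
      rintro ⟨h0, hk'⟩
      refine hS _ hk' _ h0 ?_
      show cycRel (k+1) _ _
      rw [cyc_char1]
      refine Or.inr (Or.inr (Or.inl ⟨rfl, ?_⟩))
      simp
    have hz_mem : Sum.inl (z k) ∈ e2 k '' σ ↔ Sum.inl (0 : Fin (k+1)) ∈ σ := by
      rw [mem_image_inl]
      constructor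
      · rintro (⟨i, hi, hval⟩ | ⟨heq, -⟩)
        · have hi0 : i = 0 := Fin.val_injective (by simpa using hval.symm)
          rwa [hi0] at hi
        · exact absurd heq z_ne_vB
      · intro h
        exact Or.inl ⟨0, h, by simp⟩
    have hve_mem : Sum.inl (ve k) ∈ e2 k '' σ ↔
        Sum.inl (⟨k, by omega⟩ : Fin (k+1)) ∈ σ := by
      rw [mem_image_inl]
      constructor
      · rintro (⟨i, hi, hval⟩ | ⟨heq, -⟩)
        · have hik : i = ⟨k, by omega⟩ := Fin.val_injective (by simpa using hval.symm)
          rwa [hik] at hi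
        · exact absurd heq ve_ne_vB
      · intro h
        exact Or.inl ⟨⟨k, by omega⟩, h, rfl⟩
    have hB_mem : Sum.inl (vB k) ∈ e2 k '' σ ↔ Sum.inr 0 ∈ σ := by
      rw [mem_image_inl]
      constructor
      · rintro (⟨i, -, hval⟩ | ⟨-, h⟩)
        · exfalso
          have := i.2
          simp only [vB_val] at hval
          omega
        · exact h
      · intro h
        exact Or.inr ⟨rfl, h⟩
    refine ⟨⟨⟨?_, ?_⟩, ?_, ?_⟩, ?_, ?_⟩
    · intro u hu v hv
      rw [mem_sl, mem_image_inl] at hu hv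
      rcases hu with ⟨i, hi, hui⟩ | ⟨rfl, h0⟩ <;> rcases hv with ⟨i', hi', hvi⟩ | ⟨rfl, h0'⟩
      · intro hcyc
        rw [cyc_char] at hcyc
        have h1 := i.2
        have h2 := i'.2
        refine hS _ hi _ hi' ?_
        show cycRel (k+1) i i'
        rw [cyc_char1]
        omega
      · rw [cyc_char]
        have := i.2
        simp only [vB_val]
        omega
      · rw [cyc_char]
        have := i'.2
        simp only [vB_val]
        omega
      · exact cyc_loop _
    · intro hQ
      rw [mem_image_Q] at hQ
      have h0not : Sum.inr 0 ∉ σ := fun h0 => hpole ⟨h0, hQ⟩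
      by_cases hz : Sum.inl (z k) ∈ e2 k '' σ
      · left
        intro u hu
        rw [mem_sl] at hu
        rw [cyc_vA]
        rintro (h | h)
        · apply hends
          refine ⟨hz_mem.mp hz, ?_⟩
          apply hve_mem.mp
          rw [← eq_ve_of_val h]
          exact hu
        · apply h0not
          apply hB_mem.mp
          rw [← eq_vB_of_val h]
          exact hu
      · right
        intro u hu
        rw [mem_sl] at hu
        rw [cyc_vC]
        rintro (h | h)
        · apply h0not
          apply hB_mem.mp
          rw [← eq_vB_of_val h]
          exact hu
        · apply hz
          rw [← eq_z_of_val h]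
          exact hu
    · intro h
      rw [mem_image_inl] at h
      rcases h with ⟨i, -, hval⟩ | ⟨heq, -⟩
      · have := i.2
        simp only [vA_val] at hval
        omega
      · exact vA_ne_vB heq
    · intro h
      rw [mem_image_inl] at h
      rcases h with ⟨i, -, hval⟩ | ⟨heq, -⟩
      · have := i.2
        simp only [vC_val] at hval
        omega
      · exact vB_ne_vC heq.symm
    · by_contra hc
      push_neg at hc
      exact hends ⟨hz_mem.mp hc.1, hve_mem.mp hc.2⟩
    · intro hQ hB
      rw [mem_image_Q] at hQ
      exact hpole ⟨hB_mem.mp hB, hQ⟩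

lemma hrange1 : ∀ s : Set (Vp k), AX k s → s ⊆ Set.range (Sum.inl : Fin (k+4) → Vp k) := by
  intro s hs v hv
  rcases v with u | w
  · exact ⟨u, rfl⟩
  · cases w
    exact absurd hv hs.2

end S7

open S7 in
theorem stmt_7 (n : ℕ) (hn : 4 ≤ n) :
    Nonempty (ContinuousMap.HomotopyEquiv (geom (cycRel n))
      (geom (suspRel (cycRel (n - 3))))) := by
  obtain ⟨k, rfl⟩ : ∃ k, n = k + 4 := ⟨n - 4, by omega⟩
  have h3 : k + 4 - 3 = k + 1 := by omega
  rw [h3]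
  obtain ⟨E1⟩ := equiv_ra1 (k := k)
  obtain ⟨E2⟩ := equiv_foldQc (k := k)
  obtain ⟨E3⟩ := equiv_foldaQ (k := k)
  obtain ⟨E4⟩ := equiv_foldcQ (k := k)
  obtain ⟨E5⟩ := equiv_rZ (k := k)
  have hX := geom_eq_sgeom (cycRel (k+4))
  have hY := geom_eq_sgeom (suspRel (cycRel (k+1)))
  have W1 : (geom (cycRel (k+4)) : Set (Fin (k+4) → ℝ)) ≃ₜ (sgeom (AX k) : Set (Vp k → ℝ)) :=
    (Homeomorph.setCongr hX).trans
      (reidx Sum.inl Sum.inl_injective (AX k) _ corr1 hrange1).symm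
  have W2 : (sgeom (AY k) : Set (Vp k → ℝ)) ≃ₜ
      (geom (suspRel (cycRel (k+1))) : Set ((Fin (k+1) ⊕ Fin 2) → ℝ)) :=
    (reidx (e2 k) e2_inj (AY k) _ corr2 (fun s hs => e2_range hs)).trans
      (Homeomorph.setCongr hY.symm)
  have middle : ContinuousMap.HomotopyEquiv (sgeom (AX k) : Set (Vp k → ℝ))
      (sgeom (AY k) : Set (Vp k → ℝ)) :=
    ((((E2.symm.trans E1.symm).trans E3).trans E4).trans E5)
  exact ⟨(W1.toHomotopyEquiv.trans middle).trans W2.toHomotopyEquiv⟩
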